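/- For any symmetric 3×3 matrix R, the fourth-order tensor φ(R)_{ijkl} = δ_{ij}R_{kl} + δ_{kl}R_{ij} − (1/2)δ_{ik}R_{jl} − (1/2)δ_{jl}R_{ik} − (1/2)δ_{il}R_{jk} − (1/2)δ_{jk}R_{il} has zero totally symmetric part, possesses the minor and major symmetries, and R can be recovered from A = φ(R) via R_{ij} = A_{ijll} − (δ_{ij}/4)A_{kkll} (n = 3); in particular φ is injective. -/

import Mathlib

/-! For symmetric `R`, `φ(R)_{abcd} + φ(R)_{acbd} + φ(R)_{adcb} = 0`: the three pairings of `b, c, d`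
against `a` cancel. Right multiplication by the transpositions `(1 2)` and `(1 3)` permutes `S₄`, so
three times the symmetrization of `φ(R)` is a sum of such vanishing triples. Contracting the last pair
of indices gives `A_{ijll} = R_{ij} + δ_{ij} tr R`, and contracting again gives `A_{kkll} = 4 tr R`,
from which `R` is read off. -/

open Finset Matrix

/-- Kronecker delta. -/
noncomputable def kdelta (i j : Fin 3) : ℝ := if i = j then 1 else 0

/-- Backus' isomorphism `φ` from symmetric second-order tensors to asymmetric fourth-order
tensors:
`φ(R)_{ijkl} = δ_{ij}R_{kl} + δ_{kl}R_{ij} − (1/2)(δ_{ik}R_{jl} + δ_{jl}R_{ik} + δ_{il}R_{jk} + δ_{jk}R_{il})`. -/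
noncomputable def phi (R : Matrix (Fin 3) (Fin 3) ℝ) :
    Fin 3 → Fin 3 → Fin 3 → Fin 3 → ℝ :=
  fun i j k l =>
    kdelta i j * R k l + kdelta k l * R i j -
      (1 / 2 : ℝ) * kdelta i k * R j l - (1 / 2 : ℝ) * kdelta j l * R i k -
      (1 / 2 : ℝ) * kdelta i l * R j k - (1 / 2 : ℝ) * kdelta j k * R i l

open Equiv in
theorem Equiv.Perm.sum_comp_eq_zero_of_add_comp_swap_add_comp_swap {α M : Type*}
    [AddCommMonoid M] [IsAddTorsionFree M] (T : (Fin 4 → α) → M)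
    (hT : ∀ x, T x + T (x ∘ swap 1 2) + T (x ∘ swap 1 3) = 0) (x : Fin 4 → α) :
    ∑ σ : Perm (Fin 4), T (x ∘ σ) = 0 := by
  have reindex (τ : Perm (Fin 4)) :
      ∑ σ : Perm (Fin 4), T ((x ∘ σ) ∘ τ) = ∑ σ : Perm (Fin 4), T (x ∘ σ) :=
    Fintype.sum_equiv (Equiv.mulRight τ) _ (fun σ => T (x ∘ σ)) fun _ => rfl
  have : 3 • ∑ σ : Perm (Fin 4), T (x ∘ σ) = 0 := by
    rw [← sum_eq_zero (s := univ) fun (σ : Perm (Fin 4)) _ => hT (x ∘ σ), sum_add_distrib,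
      sum_add_distrib, reindex, reindex, succ_nsmul, two_nsmul]
  simpa using this

lemma kdelta_comm (i j : Fin 3) : kdelta i j = kdelta j i := by
  simp [kdelta, eq_comm]

lemma sum_kdelta_mul (i : Fin 3) (f : Fin 3 → ℝ) : ∑ l, kdelta i l * f l = f i := by
  simp [kdelta]

lemma sum_kdelta_self : ∑ l : Fin 3, kdelta l l = 3 := by
  simp [kdelta]

section

variable {R : Matrix (Fin 3) (Fin 3) ℝ}

lemma phi_add_phi_add_phi (hR : R.IsSymm) (a b c d : Fin 3) :
    phi R a b c d + phi R a c b d + phi R a d c b = 0 := by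
  simp only [phi, kdelta_comm c b, kdelta_comm d b, kdelta_comm d c, hR.apply b c, hR.apply b d,
    hR.apply c d]
  ring

lemma phi_swap_left (hR : R.IsSymm) (i j k l : Fin 3) : phi R i j k l = phi R j i k l := by
  simp only [phi, kdelta_comm j i, hR.apply i j]
  ring

lemma phi_swap_right (hR : R.IsSymm) (i j k l : Fin 3) : phi R i j k l = phi R i j l k := by
  simp only [phi, kdelta_comm l k, hR.apply k l]
  ring

lemma phi_swap_pairs (hR : R.IsSymm) (i j k l : Fin 3) : phi R i j k l = phi R k l i j := by
  simp only [phi, kdelta_comm k i, kdelta_comm l j, kdelta_comm k j, kdelta_comm l i,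
    hR.apply j l, hR.apply i k, hR.apply i l, hR.apply j k]
  ring

lemma sum_phi_diag (hR : R.IsSymm) (i j : Fin 3) :
    ∑ l, phi R i j l l = R i j + kdelta i j * R.trace := by
  simp only [phi, sum_sub_distrib, sum_add_distrib, mul_assoc, ← mul_sum, ← sum_mul,
    sum_kdelta_mul, sum_kdelta_self, hR.apply i j, trace, diag_apply]
  ring

lemma sum_sum_phi_diag (hR : R.IsSymm) : ∑ k, ∑ l, phi R k k l l = 4 * R.trace := by
  simp only [sum_phi_diag hR, sum_add_distrib, ← sum_mul, sum_kdelta_self, trace, diag_apply]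
  ring

lemma phi_recover (hR : R.IsSymm) (i j : Fin 3) :
    R i j = (∑ l, phi R i j l l) - kdelta i j / 4 * (∑ k, ∑ l, phi R k k l l) := by
  rw [sum_phi_diag hR, sum_sum_phi_diag hR]
  ring

end

lemma phi_injOn_isSymm : Set.InjOn phi {R | R.IsSymm} := fun R hR R' hR' h => by
  ext i j
  rw [phi_recover hR, phi_recover hR', h]

/-- For a symmetric `3×3` matrix `R`, the tensor `φ(R)` has zero totally symmetric part,
has the minor and major symmetries, and `R` is recovered from `A = φ(R)` by
`R_{ij} = A_{ijll} − (δ_{ij}/4) A_{kkll}` (case `n = 3`); in particular `φ` is injective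
on symmetric matrices. -/
theorem phi_asymmetric_and_recovery (R : Matrix (Fin 3) (Fin 3) ℝ) (hR : R.IsSymm) :
    -- zero totally symmetric part
    (∀ f : Fin 4 → Fin 3,
      ∑ σ : Equiv.Perm (Fin 4), phi R (f (σ 0)) (f (σ 1)) (f (σ 2)) (f (σ 3)) = 0) ∧
    -- minor and major symmetries
    (∀ i j k l, phi R i j k l = phi R j i k l ∧ phi R i j k l = phi R i j l k ∧
      phi R i j k l = phi R k l i j) ∧
    -- recovery of R from A = φ(R)
    (∀ i j, R i j =
      (∑ l, phi R i j l l) - kdelta i j / 4 * (∑ k, ∑ l, phi R k k l l)) ∧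
    -- injectivity of φ on symmetric matrices
    (∀ R' : Matrix (Fin 3) (Fin 3) ℝ, R'.IsSymm → phi R = phi R' → R = R') :=
  ⟨Equiv.Perm.sum_comp_eq_zero_of_add_comp_swap_add_comp_swap
      (fun x => phi R (x 0) (x 1) (x 2) (x 3)) fun _ => phi_add_phi_add_phi hR _ _ _ _,
    fun i j k l => ⟨phi_swap_left hR i j k l, phi_swap_right hR i j k l, phi_swap_pairs hR i j k l⟩,
    phi_recover hR, fun _ hR' => phi_injOn_isSymm hR hR'⟩
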